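/- arXiv:0912.1866 — 2 statements merged into one kernel-verified Lean document; each statement's English description precedes it below -/
import Mathlib

section
/- There exist constants a, b > 0 and x₀ such that a·x < ϑ(x) < b·x for all x ≥ x₀, where ϑ(x) = ∑_{p ≤ x} log p is the Chebyshev theta function. -/
/-!
The upper bound is `θ x ≤ x log 4`, from `primorial n ≤ 4 ^ n`. The lower bound comes from
`lcm(1, …, n) ≥ 2 ^ n / (n + 1)` together with `ψ x - θ x ≤ 2 √x log x`, which gives
`θ x ≥ x log 2 - o(x)`.
-/

open Real Filter

/-- The Chebyshev theta function `ϑ(x) = ∑_{p ≤ x} log p`. -/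
noncomputable def chebyshevTheta (x : ℝ) : ℝ :=
  ∑ p ∈ Finset.filter Nat.Prime (Finset.range (⌊x⌋₊ + 1)), Real.log p

open Asymptotics Chebyshev

theorem chebyshevTheta_eq_theta (x : ℝ) : chebyshevTheta x = θ x := by
  rw [chebyshevTheta, theta_eq_sum_Icc, Nat.range_succ_eq_Icc_zero]

theorem isLittleO_sqrt_mul_log_atTop : (fun x ↦ √x * log x) =o[atTop] id := by
  have hlog : log =o[atTop] (√·) := by
    simpa only [sqrt_eq_rpow] using isLittleO_log_rpow_atTop one_half_pos
  refine ((isBigO_refl (√·) atTop).mul_isLittleO hlog).congr' .rfl ?_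
  filter_upwards [eventually_ge_atTop 0] with x hx using mul_self_sqrt hx

theorem isLittleO_log_add_const_atTop (c : ℝ) : (fun x ↦ log (x + c)) =o[atTop] id :=
  (isLittleO_log_id_atTop.comp_tendsto (tendsto_atTop_add_const_right _ c tendsto_id))
    |>.trans_isBigO ((isBigO_refl id atTop).add (isLittleO_const_id_atTop c).isBigO)

/-- `Chebyshev.theta_ge'` bounds `θ x` below by `x log 2` minus this function. -/
theorem isLittleO_theta_ge_error :
    (fun x ↦ log 2 + log (x + 2) + 2 * √x * log x) =o[atTop] id := by
  simp_rw [mul_assoc]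
  exact ((isLittleO_const_id_atTop _).add (isLittleO_log_add_const_atTop 2)).add
    (isLittleO_sqrt_mul_log_atTop.const_mul_left 2)

theorem eventually_mul_lt_theta {c : ℝ} (hc : c < log 2) : ∀ᶠ x in atTop, c * x < θ x := by
  have hε : 0 < (log 2 - c) / 2 := by linarith
  filter_upwards [isLittleO_theta_ge_error.bound hε, eventually_ge_atTop 1] with x hE hx
  rw [id, norm_of_nonneg (by linarith : (0 : ℝ) ≤ x)] at hE
  nlinarith [theta_ge' hx, le_norm_self (log 2 + log (x + 2) + 2 * √x * log x)]

/-- **Chebyshev's theorem.** There exist constants `a, b > 0` and `x₀` such that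
`a·x < ϑ(x) < b·x` for all `x ≥ x₀`. -/
theorem chebyshevTheta_bounds :
    ∃ a b : ℝ, 0 < a ∧ 0 < b ∧ ∃ x₀ : ℝ, ∀ x : ℝ, x₀ ≤ x →
      a * x < chebyshevTheta x ∧ chebyshevTheta x < b * x := by
  have hlog2 : 0 < log 2 := log_pos one_lt_two
  obtain ⟨x₀, hx₀⟩ := eventually_atTop.1
    ((eventually_mul_lt_theta (half_lt_self hlog2)).and (eventually_gt_atTop 0))
  refine ⟨log 2 / 2, log 4 + 1, by positivity, by positivity, x₀, fun x hx ↦ ?_⟩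
  obtain ⟨hlower, hx_pos⟩ := hx₀ x hx
  rw [chebyshevTheta_eq_theta]
  exact ⟨hlower, (theta_le_log4_mul_x hx_pos.le).trans_lt (by linarith)⟩
end

section
/- Let ω(N) denote the number of distinct prime divisors of N. Then: (i) for every ε > 0 there is N_ε such that ω(N) < (1 + ε) · log N / log log N for all integers N ≥ N_ε; and (ii) for every ε > 0, the inequality ω(N) > (1 − ε) · log N / log log N holds for infinitely many integers N. -/
open Real Filter
open scoped Chebyshev

/-!
The product of the `k = ω(N)` distinct prime factors of `N` is at least `k!`, so
`k log k - k ≤ log N`; inverting `k ↦ k (log k - 1)` gives `ω(N) < (1 + ε) log N / log log N`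
for large `N`. Conversely, for the primorial `N = n#` we have `ω(N) = π(n)` and
`log N = θ(n) ≤ π(n) log n`, while Chebyshev's bound `θ(n) ≥ n / 4` gives
`log log N = log θ(n) ≥ log n - log 4`, so that `ω(N) ≥ θ(n) / log n` exceeds
`(1 - ε) log N / log log N` for large `n`.
-/

open Nat in
theorem Finset.factorial_card_le_prod (s : Finset ℕ) (hs : ∀ x ∈ s, 0 < x) :
    s.card ! ≤ ∏ x ∈ s, x := by
  induction s using Finset.induction_on_max with
  | empty => simp
  | insert a t hlt ih =>
    have ha : a ∉ t := fun h => lt_irrefl a (hlt a h)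
    have hsub : t ⊆ Finset.Ico 1 a := fun x hx =>
      Finset.mem_Ico.2 ⟨hs x (Finset.mem_insert_of_mem hx), hlt x hx⟩
    have hcard : t.card + 1 ≤ a := by
      have := Finset.card_le_card hsub
      simp only [Nat.card_Ico] at this
      have := hs a (Finset.mem_insert_self a t)
      omega
    rw [Finset.card_insert_of_notMem ha, Finset.prod_insert ha, Nat.factorial_succ]
    exact Nat.mul_le_mul hcard (ih fun x hx => hs x (Finset.mem_insert_of_mem hx))

open Nat in
theorem Nat.factorial_card_primeFactors_le {N : ℕ} (hN : N ≠ 0) : N.primeFactors.card ! ≤ N :=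
  (Finset.factorial_card_le_prod _ fun _ hp => (Nat.prime_of_mem_primeFactors hp).pos).trans
    (Nat.le_of_dvd (Nat.pos_of_ne_zero hN) (Nat.prod_primeFactors_dvd N))

open Nat in
theorem Real.mul_log_sub_le_log_factorial (k : ℕ) : k * log k - k ≤ log (k ! : ℝ) := by
  rcases k.eq_zero_or_pos with rfl | hk
  · simp
  have h := pow_div_factorial_le_exp (k : ℝ) (Nat.cast_nonneg k) k
  rw [div_le_iff₀ (by positivity)] at h
  have hlog := Real.log_le_log (by positivity) h
  rw [Real.log_pow, Real.log_mul (Real.exp_ne_zero _) (by positivity), Real.log_exp] at hlog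
  linarith

theorem card_primeFactors_mul_log_sub_le_log {N : ℕ} (hN : N ≠ 0) :
    (N.primeFactors.card : ℝ) * log N.primeFactors.card - N.primeFactors.card ≤ log N :=
  (Real.mul_log_sub_le_log_factorial _).trans <|
    Real.log_le_log (by positivity) (mod_cast Nat.factorial_card_primeFactors_le hN)

theorem Real.lt_mul_div_log_of_mul_log_sub_le {ε L k : ℝ} (hε : 0 < ε) (hL : 1 < L)
    (hLL : (1 + ε) * (log (log L) + 1) < ε * log L) (hk : k * log k - k ≤ L) :
    k < (1 + ε) * L / log L := by
  have hx : 0 < log L := log_pos hL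
  set K := (1 + ε) * L / log L with hK
  have hKpos : 0 < K := by positivity
  have hlogK : log K = log (1 + ε) + log L - log (log L) := by
    rw [hK, log_div (by positivity) hx.ne', log_mul (by positivity) (by positivity)]
  have hgap : log L < (1 + ε) * (log K - 1) := by
    have := log_nonneg (by linarith : (1 : ℝ) ≤ 1 + ε)
    rw [hlogK]
    nlinarith
  have hlogK1 : 0 < log K - 1 := pos_of_mul_pos_right (hx.trans hgap) (by positivity)
  by_contra! hKk
  have hLK : L < K * (log K - 1) := by
    have : K * log L = (1 + ε) * L := by rw [hK]; field_simp
    nlinarith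
  have hmono : K * (log K - 1) ≤ k * (log k - 1) := by
    gcongr
    exact (hKpos.trans_le hKk).le
  linarith

theorem Real.eventually_mul_log_add_one_lt {ε : ℝ} (hε : 0 < ε) :
    ∀ᶠ x in atTop, (1 + ε) * (log x + 1) < ε * x := by
  have h := ((isLittleO_log_id_atTop.add (Asymptotics.isLittleO_const_id_atTop (1 : ℝ))
    ).const_mul_left (1 + ε)).def (half_pos hε)
  filter_upwards [h, eventually_gt_atTop 0] with x hx hx0
  rw [Real.norm_eq_abs, Real.norm_eq_abs, id, abs_of_pos hx0] at hx
  linarith [le_abs_self ((1 + ε) * (log x + 1)), mul_pos hε hx0]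

theorem eventually_card_primeFactors_lt {ε : ℝ} (hε : 0 < ε) :
    ∀ᶠ N : ℕ in atTop, (N.primeFactors.card : ℝ) < (1 + ε) * log N / log (log N) := by
  have hlog : Tendsto (fun N : ℕ => log (N : ℝ)) atTop atTop :=
    tendsto_log_atTop.comp tendsto_natCast_atTop_atTop
  filter_upwards [hlog.eventually_gt_atTop 1,
    (tendsto_log_atTop.comp hlog).eventually (eventually_mul_log_add_one_lt hε)] with N hN1 hNε
  have hN : N ≠ 0 := by rintro rfl; norm_num at hN1
  exact lt_mul_div_log_of_mul_log_sub_le hε hN1 hNε (card_primeFactors_mul_log_sub_le_log hN)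

theorem Real.eventually_log_le_mul_sqrt {c : ℝ} (hc : 0 < c) :
    ∀ᶠ x in atTop, log x ≤ c * √x := by
  filter_upwards [(isLittleO_log_rpow_atTop one_half_pos).def hc, eventually_ge_atTop 1]
    with x hx hx1
  rwa [Real.norm_eq_abs, Real.norm_eq_abs, abs_of_nonneg (log_nonneg hx1),
    abs_of_nonneg (by positivity), ← Real.sqrt_eq_rpow] at hx

theorem Chebyshev.eventually_div_four_le_theta :
    ∀ᶠ n : ℕ in atTop, (n : ℝ) / 4 ≤ θ n := by
  have hlog := eventually_log_le_mul_sqrt (c := 1 / 16) (by norm_num)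
  filter_upwards [tendsto_natCast_atTop_atTop.eventually hlog,
    (tendsto_natCast_atTop_atTop.comp (tendsto_add_atTop_nat 1)).eventually hlog,
    eventually_ge_atTop 1] with n hn hn1 hn0
  simp only [Function.comp, Nat.cast_add, Nat.cast_one] at hn1
  have hn0 : (1 : ℝ) ≤ n := mod_cast hn0
  have hsq : √(n : ℝ) * √(n : ℝ) = n := Real.mul_self_sqrt (by positivity)
  have hsq1 : √((n : ℝ) + 1) ≤ (n : ℝ) + 1 := Real.sqrt_le_self_iff.2 (Or.inr (by linarith))
  have hlog2 := Real.log_two_gt_d9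
  have := theta_ge n
  nlinarith [Real.sqrt_nonneg (n : ℝ)]

theorem eventually_card_primeFactors_primorial_gt {ε : ℝ} (hε : 0 < ε) :
    ∀ᶠ n : ℕ in atTop, (1 - ε) * log (primorial n) / log (log (primorial n)) <
      ((primorial n).primeFactors.card : ℝ) := by
  have hlog : Tendsto (fun n : ℕ => log (n : ℝ)) atTop atTop :=
    tendsto_log_atTop.comp tendsto_natCast_atTop_atTop
  filter_upwards [Chebyshev.eventually_div_four_le_theta, hlog.eventually_gt_atTop (log 4 / ε),
    eventually_ge_atTop 5] with n hθ hn hn5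
  have hn5 : (5 : ℝ) ≤ n := mod_cast hn5
  have hθlog : log (primorial n) = θ n := by
    simp [Chebyshev.theta_eq_log_primorial]
  rw [primeFactors_primorial, Nat.primesLE_card_eq_primeCounting, hθlog]
  have hlogn : 0 < log (n : ℝ) := log_pos (by linarith)
  have hθ1 : 1 < θ n := by linarith
  have hlogθ : (1 - ε) * log n < log (θ n) := by
    have h4 : log (n / 4 : ℝ) ≤ log (θ n) := log_le_log (by positivity) hθ
    rw [log_div (by positivity) (by norm_num)] at h4
    have := (div_lt_iff₀ hε).1 hn
    nlinarith
  calc (1 - ε) * θ n / log (θ n)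
      < θ n / log n := by
        rw [div_lt_div_iff₀ (log_pos hθ1) hlogn]
        nlinarith
    _ ≤ Nat.primeCounting n :=
        div_le_of_le_mul₀ hlogn.le (Nat.cast_nonneg _) (Chebyshev.theta_le_pi_mul_log n)

/-- **Maximal order of `ω`.** (i) For every `ε > 0` there is `N_ε` such that
`ω(N) < (1+ε) · log N / log log N` for all `N ≥ N_ε`; and (ii) for every `ε > 0`,
`ω(N) > (1−ε) · log N / log log N` for infinitely many integers `N`. -/
theorem omega_bounds :
    (∀ ε : ℝ, 0 < ε → ∃ Nε : ℕ, ∀ N : ℕ, Nε ≤ N →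
        (N.primeFactors.card : ℝ) < (1 + ε) * Real.log N / Real.log (Real.log N)) ∧
      (∀ ε : ℝ, 0 < ε → ∃ᶠ N : ℕ in Filter.atTop,
        (N.primeFactors.card : ℝ) > (1 - ε) * Real.log N / Real.log (Real.log N)) := by
  refine ⟨fun ε hε => eventually_atTop.1 (eventually_card_primeFactors_lt hε), fun ε hε => ?_⟩
  have hprimorial : Tendsto primorial atTop atTop :=
    tendsto_atTop_mono (fun _ => le_primorial_self) tendsto_id
  exact hprimorial.frequently (eventually_card_primeFactors_primorial_gt hε).frequently
end
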